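/- For n ≥ 2 and 2 ≤ j ≤ n, ∑_{r=j}^{n} (n/(n-1))^n · (r/n) · (n_[r]/n^r) · (1/j) · D_{r-j}/(r-j)! = (1/j) · n_[j]/(n-1)^j. In words: the expected number of j-cycles in the core of the screaming-toes random mapping equals n_[j] / (j·(n-1)^j). -/

import Mathlib

/-!
Up to the factor `1/j`, the sum is `(n/(n-1))^n ∑_{r=m}^n (r/n) (n_[r]/n^r) D_{r-m}/(r-m)!`
with `m = j`. Write `D_k / k! = ∑_{i ≤ k} (-1)^i / i!` and exchange the two sums. The inner sum
over `r` then telescopes, because `(r/n) n_[r]/n^r = n_[r]/n^r - n_[r+1]/n^(r+1)` and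
`n_[n+1] = 0`. Since `n_[m+i] = n_[m] (n-m)_[i]`, what remains is `n_[m]/n^m` times the binomial
expansion of `(1 - 1/n)^(n-m)`, and the factor `(n/(n-1))^n` turns `n_[m] (n-1)^(n-m) / n^n`
into `n_[m] / (n-1)^m`.
-/

open Finset

/-- Derangement number `D k = k! * ∑_{j=0}^k (-1)^j/j!`, as a real number. -/
noncomputable def derNum (k : ℕ) : ℝ :=
  (k.factorial : ℝ) * ∑ j ∈ Finset.range (k + 1), (-1 : ℝ) ^ j / (j.factorial : ℝ)

section

variable {K : Type*} [Field K] [CharZero K]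

theorem descFactorial_div_pow_sub_succ {n r : ℕ} (hn : n ≠ 0) (hr : r ≤ n) :
    (n.descFactorial r : K) / (n : K) ^ r - n.descFactorial (r + 1) / (n : K) ^ (r + 1)
      = r / n * (n.descFactorial r / (n : K) ^ r) := by
  rw [Nat.descFactorial_succ, Nat.cast_mul, Nat.cast_sub hr, pow_succ]
  field_simp
  ring

theorem sum_Icc_mul_descFactorial_div_pow {n a : ℕ} (hn : n ≠ 0) (ha : a ≤ n) :
    ∑ r ∈ Icc a n, (r : K) / n * (n.descFactorial r / (n : K) ^ r)
      = n.descFactorial a / (n : K) ^ a := by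
  let f : ℕ → K := fun r ↦ n.descFactorial r / (n : K) ^ r
  have hlast : f (n + 1) = 0 := by simp [f]
  calc ∑ r ∈ Icc a n, (r : K) / n * f r = ∑ r ∈ Icc a n, -(f (r + 1) - f r) :=
        sum_congr rfl fun r hr ↦ by
          rw [neg_sub, descFactorial_div_pow_sub_succ hn (mem_Icc.1 hr).2]
    _ = f a := by rw [sum_neg_distrib, sum_Icc_sub ha, hlast, zero_sub, neg_neg]

theorem sum_range_descFactorial_div_factorial_mul_pow (N : ℕ) (x : K) :
    ∑ i ∈ range (N + 1), (N.descFactorial i : K) / i.factorial * x ^ i = (x + 1) ^ N := by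
  rw [add_pow]
  refine sum_congr rfl fun i _ ↦ ?_
  rw [Nat.descFactorial_eq_factorial_mul_choose, Nat.cast_mul,
    mul_div_cancel_left₀ _ (Nat.cast_ne_zero.2 i.factorial_ne_zero), one_pow, mul_one, mul_comm]

end

theorem derNum_div_factorial (k : ℕ) :
    derNum k / k.factorial = ∑ i ∈ range (k + 1), (-1 : ℝ) ^ i / i.factorial := by
  rw [derNum, mul_div_cancel_left₀ _ (by positivity)]

theorem Nat.descFactorial_add (n m i : ℕ) :
    n.descFactorial (m + i) = n.descFactorial m * (n - m).descFactorial i := by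
  rw [← Nat.descFactorial_mul_descFactorial (Nat.le_add_right m i), Nat.add_sub_cancel_left,
    mul_comm]

theorem sum_Icc_mul_derNum_div_factorial {n m : ℕ} (hn : n ≠ 0) (hm : m ≤ n) :
    ∑ r ∈ Icc m n, (r : ℝ) / n * (n.descFactorial r / (n : ℝ) ^ r) *
        (derNum (r - m) / (r - m).factorial)
      = n.descFactorial m / (n : ℝ) ^ m * ((n - 1) / n) ^ (n - m) := by
  calc _ = ∑ r ∈ Icc m n, ∑ i ∈ range (r - m + 1),
          (-1 : ℝ) ^ i / i.factorial * ((r : ℝ) / n * (n.descFactorial r / (n : ℝ) ^ r)) := by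
        simp_rw [derNum_div_factorial, mul_sum, mul_comm]
    _ = ∑ i ∈ range (n - m + 1), ∑ r ∈ Icc (m + i) n,
          (-1 : ℝ) ^ i / i.factorial * ((r : ℝ) / n * (n.descFactorial r / (n : ℝ) ^ r)) :=
        sum_comm' fun r i ↦ by simp only [mem_Icc, mem_range]; omega
    _ = ∑ i ∈ range (n - m + 1),
          (-1 : ℝ) ^ i / i.factorial * (n.descFactorial (m + i) / (n : ℝ) ^ (m + i)) :=
        sum_congr rfl fun i hi ↦ by
          rw [← mul_sum, sum_Icc_mul_descFactorial_div_pow hn (by simp at hi; omega)]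
    _ = n.descFactorial m / (n : ℝ) ^ m * ∑ i ∈ range (n - m + 1),
          ((n - m).descFactorial i : ℝ) / i.factorial * (-1 / n) ^ i := by
        rw [mul_sum]
        refine sum_congr rfl fun i _ ↦ ?_
        rw [Nat.descFactorial_add, Nat.cast_mul, pow_add, div_pow]
        ring
    _ = _ := by
        rw [sum_range_descFactorial_div_factorial_mul_pow]
        congr 2
        field_simp
        ring

theorem div_sub_one_pow_mul_sum_Icc_derNum {n m : ℕ} (hn : 2 ≤ n) (hm : m ≤ n) :
    ((n : ℝ) / (n - 1)) ^ n *
        ∑ r ∈ Icc m n, (r : ℝ) / n * (n.descFactorial r / (n : ℝ) ^ r) *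
          (derNum (r - m) / (r - m).factorial)
      = n.descFactorial m / ((n : ℝ) - 1) ^ m := by
  have hn0 : (n : ℝ) ≠ 0 := by positivity
  have hn1 : (n : ℝ) - 1 ≠ 0 := sub_ne_zero.2 (by exact_mod_cast (by omega : n ≠ 1))
  have hsplit :
      ((n : ℝ) / (n - 1)) ^ n = ((n : ℝ) / (n - 1)) ^ m * ((n : ℝ) / (n - 1)) ^ (n - m) := by
    rw [← pow_add, Nat.add_sub_cancel' hm]
  have hinv : (n : ℝ) / (n - 1) * ((n - 1) / n) = 1 := by field_simp
  rw [sum_Icc_mul_derNum_div_factorial (by omega) hm, hsplit, mul_mul_mul_comm, ← mul_pow, hinv,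
    one_pow, mul_one, div_pow]
  field_simp

theorem stmt_6_general (n j : ℕ) (hn : 2 ≤ n) (hjn : j ≤ n) :
    ∑ r ∈ Finset.Icc j n,
        ((n : ℝ) / ((n : ℝ) - 1)) ^ n * ((r : ℝ) / n) *
          ((n.descFactorial r : ℝ) / (n : ℝ) ^ r) * (1 / (j : ℝ)) *
          (derNum (r - j) / ((r - j).factorial : ℝ))
    = (1 / (j : ℝ)) * ((n.descFactorial j : ℝ) / ((n : ℝ) - 1) ^ j) := by
  rw [← div_sub_one_pow_mul_sum_Icc_derNum hn hjn, mul_sum, mul_sum]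
  exact sum_congr rfl fun r _ ↦ by ring

theorem stmt_6 (n j : ℕ) (hn : 2 ≤ n) (hj2 : 2 ≤ j) (hjn : j ≤ n) :
    ∑ r ∈ Finset.Icc j n,
        ((n : ℝ) / ((n : ℝ) - 1)) ^ n * ((r : ℝ) / n) *
          ((n.descFactorial r : ℝ) / (n : ℝ) ^ r) * (1 / (j : ℝ)) *
          (derNum (r - j) / ((r - j).factorial : ℝ))
    = (1 / (j : ℝ)) * ((n.descFactorial j : ℝ) / ((n : ℝ) - 1) ^ j) :=
  stmt_6_general n j hn hjn
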